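/- arXiv:1912.06405 — 4 statements merged into one kernel-verified Lean document; each statement's English description precedes it below -/
import Mathlib

section
/- For every real ν ≥ 1/2 and every y > 0, the inequality y·∫_0^∞ cosh(t)·exp(−y·cosh t)·cosh(νt) dt ≤ (ν + y)·∫_0^∞ exp(−y·cosh t)·cosh(νt) dt holds; equivalently, |y·K_ν′(y)| ≤ ν·K_ν(y) + y·K_ν(y), where K_ν′(y) = −∫_0^∞ cosh(t)·exp(−y·cosh t)·cosh(νt) dt is the derivative of K_ν. -/
/- The proof is an integration by parts and a pointwise inequality. Differentiating
`exp (-y cosh t) sinh (ν t)` gives `ν K_ν(y) = y ∫₀^∞ sinh t e^{-y cosh t} sinh(νt) dt`, while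
`cosh (νt - t) ≤ cosh (νt)` for `ν ≥ 1/2` expands to
`cosh t cosh (νt) ≤ sinh t sinh (νt) + cosh (νt)`. Multiplying by `y e^{-y cosh t}` and
integrating gives `y ∫₀^∞ cosh t e^{-y cosh t} cosh(νt) dt ≤ ν K_ν(y) + y K_ν(y)`. -/

open MeasureTheory Real Set

/-- The modified Bessel function of the second kind, via its integral representation. -/
noncomputable def besselK (ν y : ℝ) : ℝ :=
  ∫ t in Ioi (0:ℝ), Real.exp (-y * Real.cosh t) * Real.cosh (ν * t)

/-- The derivative `K_ν'(y) = -∫_0^∞ cosh t · exp(-y cosh t) · cosh(ν t) dt`. -/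
noncomputable def besselK' (ν y : ℝ) : ℝ :=
  -∫ t in Ioi (0:ℝ), Real.cosh t * Real.exp (-y * Real.cosh t) * Real.cosh (ν * t)

theorem Real.sq_div_four_le_cosh (t : ℝ) : t ^ 2 / 4 ≤ cosh t := by
  rw [← cosh_abs, ← sq_abs, cosh_eq]
  have h₁ := quadratic_le_exp_of_nonneg (abs_nonneg t)
  have h₂ := add_one_le_exp (-|t|)
  nlinarith

theorem Real.abs_cosh_le_exp_abs (x : ℝ) : |cosh x| ≤ exp |x| := by
  rw [abs_of_pos (cosh_pos x), ← cosh_abs, ← cosh_add_sinh]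
  exact le_add_of_nonneg_right (sinh_nonneg_iff.2 (abs_nonneg x))

theorem Real.abs_sinh_le_exp_abs (x : ℝ) : |sinh x| ≤ exp |x| := by
  rw [abs_sinh, ← cosh_add_sinh]
  exact le_add_of_nonneg_left (cosh_pos _).le

theorem mul_abs_sub_mul_cosh_le (a : ℝ) {y : ℝ} (hy : 0 < y) (t : ℝ) :
    a * |t| - y * cosh t ≤ 2 * a ^ 2 / y - y / 8 * t ^ 2 := by
  have hcosh := mul_le_mul_of_nonneg_left (sq_div_four_le_cosh t) hy.le
  rw [← sq_abs t] at hcosh ⊢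
  rw [← mul_le_mul_iff_right₀ hy]
  field_simp
  nlinarith [sq_nonneg (y * |t| - 4 * a)]

theorem integrable_exp_neg_mul_cosh_mul {y a : ℝ} (hy : 0 < y) {g : ℝ → ℝ}
    (hg : Continuous g) (hbound : ∀ t, |g t| ≤ exp (a * |t|)) :
    Integrable fun t => exp (-y * cosh t) * g t := by
  refine ((integrable_exp_neg_mul_sq (by positivity : 0 < y / 8)).const_mul
    (exp (2 * a ^ 2 / y))).mono' (by fun_prop) (Filter.Eventually.of_forall fun t => ?_)
  calc ‖exp (-y * cosh t) * g t‖ = exp (-y * cosh t) * |g t| := by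
        rw [Real.norm_eq_abs, abs_mul, abs_of_pos (exp_pos _)]
    _ ≤ exp (-y * cosh t) * exp (a * |t|) := by gcongr; exact hbound t
    _ = exp (a * |t| - y * cosh t) := by rw [← exp_add]; ring_nf
    _ ≤ exp (2 * a ^ 2 / y - y / 8 * t ^ 2) := exp_le_exp.2 (mul_abs_sub_mul_cosh_le a hy t)
    _ = exp (2 * a ^ 2 / y) * exp (-(y / 8) * t ^ 2) := by rw [← exp_add]; ring_nf

theorem abs_mul_le_exp_add_mul {u v a b s : ℝ} (hu : |u| ≤ exp (a * s))
    (hv : |v| ≤ exp (b * s)) : |u * v| ≤ exp ((a + b) * s) := by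
  rw [abs_mul, add_mul, exp_add]
  exact mul_le_mul hu hv (abs_nonneg _) (exp_pos _).le

theorem abs_cosh_mul_le (ν t : ℝ) : |cosh (ν * t)| ≤ exp (|ν| * |t|) :=
  abs_mul ν t ▸ abs_cosh_le_exp_abs (ν * t)

theorem abs_sinh_mul_le (ν t : ℝ) : |sinh (ν * t)| ≤ exp (|ν| * |t|) :=
  abs_mul ν t ▸ abs_sinh_le_exp_abs (ν * t)

section Integrability

variable {y : ℝ} (hy : 0 < y) (ν : ℝ)
include hy

theorem integrable_exp_neg_mul_cosh_mul_cosh :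
    Integrable fun t => exp (-y * cosh t) * cosh (ν * t) :=
  integrable_exp_neg_mul_cosh_mul hy (by fun_prop) (abs_cosh_mul_le ν)

theorem integrable_exp_neg_mul_cosh_mul_sinh :
    Integrable fun t => exp (-y * cosh t) * sinh (ν * t) :=
  integrable_exp_neg_mul_cosh_mul hy (by fun_prop) (abs_sinh_mul_le ν)

theorem integrable_cosh_mul_exp_neg_mul_cosh_mul_cosh :
    Integrable fun t => cosh t * exp (-y * cosh t) * cosh (ν * t) := by
  have hbound (t : ℝ) : |cosh t * cosh (ν * t)| ≤ exp ((1 + |ν|) * |t|) :=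
    abs_mul_le_exp_add_mul (by simpa using abs_cosh_mul_le 1 t) (abs_cosh_mul_le ν t)
  exact (integrable_exp_neg_mul_cosh_mul hy (by fun_prop) hbound).congr
    (Filter.Eventually.of_forall fun t => by ring)

theorem integrable_sinh_mul_exp_neg_mul_cosh_mul_sinh :
    Integrable fun t => sinh t * exp (-y * cosh t) * sinh (ν * t) := by
  have hbound (t : ℝ) : |sinh t * sinh (ν * t)| ≤ exp ((1 + |ν|) * |t|) :=
    abs_mul_le_exp_add_mul (by simpa using abs_sinh_mul_le 1 t) (abs_sinh_mul_le ν t)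
  exact (integrable_exp_neg_mul_cosh_mul hy (by fun_prop) hbound).congr
    (Filter.Eventually.of_forall fun t => by ring)

end Integrability

theorem hasDerivAt_exp_neg_mul_cosh_mul_sinh (y ν t : ℝ) :
    HasDerivAt (fun t => exp (-y * cosh t) * sinh (ν * t))
      (ν * (exp (-y * cosh t) * cosh (ν * t))
        - y * (sinh t * exp (-y * cosh t) * sinh (ν * t))) t := by
  have hexp := ((hasDerivAt_cosh t).const_mul (-y)).exp
  have hsinh := ((hasDerivAt_id' t).const_mul ν).sinh
  exact (hexp.mul hsinh).congr_deriv (by ring)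

theorem mul_besselK_eq_mul_integral_sinh_mul_sinh {y : ℝ} (hy : 0 < y) (ν : ℝ) :
    ν * besselK ν y = y * ∫ t in Ioi (0:ℝ), sinh t * exp (-y * cosh t) * sinh (ν * t) := by
  have hderiv := fun t (_ : t ∈ Ici (0:ℝ)) => hasDerivAt_exp_neg_mul_cosh_mul_sinh y ν t
  have hint := (integrable_exp_neg_mul_cosh_mul_cosh hy ν).const_mul ν
  have hint' := (integrable_sinh_mul_exp_neg_mul_cosh_mul_sinh hy ν).const_mul y
  -- The boundary term at infinity vanishes because both it and its derivative are integrable.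
  have hlim := tendsto_zero_of_hasDerivAt_of_integrableOn_Ioi
    (fun t ht => hderiv t (Ioi_subset_Ici_self ht)) (hint.sub hint').integrableOn
    (integrable_exp_neg_mul_cosh_mul_sinh hy ν).integrableOn
  have hFTC := integral_Ioi_of_hasDerivAt_of_tendsto' hderiv (hint.sub hint').integrableOn hlim
  rw [integral_sub hint.integrableOn hint'.integrableOn, integral_const_mul,
    integral_const_mul] at hFTC
  simp only [mul_zero, sinh_zero, sub_zero] at hFTC
  rw [besselK]
  linarith

theorem cosh_mul_cosh_le_sinh_mul_sinh_add_cosh {ν t : ℝ} (hν : 1 / 2 ≤ ν) (ht : 0 ≤ t) :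
    cosh t * cosh (ν * t) ≤ sinh t * sinh (ν * t) + cosh (ν * t) := by
  have hνt : |ν * t - t| ≤ |ν * t| := by
    rw [abs_le, abs_of_nonneg (by positivity)]
    constructor <;> nlinarith
  have := cosh_le_cosh.2 hνt
  rw [cosh_sub] at this
  linarith

theorem integral_cosh_mul_exp_neg_mul_cosh_mul_cosh_le {ν y : ℝ} (hν : 1 / 2 ≤ ν) (hy : 0 < y) :
    ∫ t in Ioi (0:ℝ), cosh t * exp (-y * cosh t) * cosh (ν * t)
      ≤ (∫ t in Ioi (0:ℝ), sinh t * exp (-y * cosh t) * sinh (ν * t)) + besselK ν y := by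
  have hsinh := (integrable_sinh_mul_exp_neg_mul_cosh_mul_sinh hy ν).integrableOn (s := Ioi 0)
  have hcosh := (integrable_exp_neg_mul_cosh_mul_cosh hy ν).integrableOn (s := Ioi 0)
  rw [besselK, ← integral_add hsinh hcosh]
  refine setIntegral_mono_on (integrable_cosh_mul_exp_neg_mul_cosh_mul_cosh hy ν).integrableOn
    (hsinh.add hcosh) measurableSet_Ioi fun t ht => ?_
  have := mul_le_mul_of_nonneg_left
    (cosh_mul_cosh_le_sinh_mul_sinh_add_cosh hν (le_of_lt ht)) (exp_pos (-y * cosh t)).le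
  linarith

/-- For `ν ≥ 1/2` and `y > 0`:
`y ∫_0^∞ cosh t e^{-y cosh t} cosh(νt) dt ≤ (ν + y) ∫_0^∞ e^{-y cosh t} cosh(νt) dt`,
equivalently `|y K_ν'(y)| ≤ ν K_ν(y) + y K_ν(y)`. -/
theorem abs_mul_besselK_deriv_le (ν y : ℝ) (hν : 1/2 ≤ ν) (hy : 0 < y) :
    y * ∫ t in Ioi (0:ℝ), Real.cosh t * Real.exp (-y * Real.cosh t) * Real.cosh (ν * t)
      ≤ (ν + y) * ∫ t in Ioi (0:ℝ), Real.exp (-y * Real.cosh t) * Real.cosh (ν * t) ∧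
    |y * besselK' ν y| ≤ ν * besselK ν y + y * besselK ν y := by
  have hle := mul_le_mul_of_nonneg_left
    (integral_cosh_mul_exp_neg_mul_cosh_mul_cosh_le hν hy) hy.le
  have hIBP := mul_besselK_eq_mul_integral_sinh_mul_sinh hy ν
  have hnonneg : 0 ≤ ∫ t in Ioi (0:ℝ), cosh t * exp (-y * cosh t) * cosh (ν * t) :=
    setIntegral_nonneg measurableSet_Ioi fun t _ => by positivity
  have hmain : y * ∫ t in Ioi (0:ℝ), cosh t * exp (-y * cosh t) * cosh (ν * t)
      ≤ ν * besselK ν y + y * besselK ν y := by linarith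
  refine ⟨by rw [add_mul]; exact hmain, ?_⟩
  rwa [besselK', mul_neg, abs_neg, abs_of_nonneg (mul_nonneg hy.le hnonneg)]
end

section
/- As s → 0⁺, the quantity K_0(s) + log s = ∫_0^∞ exp(−s·cosh t) dt + log s converges to log 2 − γ, where γ is the Euler–Mascheroni constant; that is, K_0(s) = −log s + log 2 − γ + o(1) as s → 0⁺. -/
open MeasureTheory Real Set Filter Topology

/-!
The substitution `x = (s / 2) eᵗ` turns `K₀(s)` into `∫_{s/2}^∞ e^{-x - (s/2)²/x} dx / x`,
which differs from the exponential integral `E₁(s/2) = ∫_{s/2}^∞ e^{-x} dx / x` by at most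
`s / 2`. Integrating by parts, `E₁(a) + log a = (1 - e^{-a}) log a + ∫_a^∞ e^{-x} log x dx`,
and the last integral tends to `∫_0^∞ e^{-x} log x dx = Γ'(1) = -γ` as `a → 0⁺`.
-/

lemma abs_log_le_rpow_add_rpow_neg_div {x ε : ℝ} (hx : 0 ≤ x) (hε : 0 < ε) :
    |log x| ≤ (x ^ ε + x ^ (-ε)) / ε := by
  have hup : log x ≤ x ^ ε / ε := log_le_rpow_div hx hε
  have hlow : log x⁻¹ ≤ x⁻¹ ^ ε / ε := log_le_rpow_div (inv_nonneg.2 hx) hε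
  rw [log_inv, inv_rpow hx, ← rpow_neg hx] at hlow
  have : 0 ≤ x ^ ε / ε := div_nonneg (rpow_nonneg hx _) hε.le
  have : 0 ≤ x ^ (-ε) / ε := div_nonneg (rpow_nonneg hx _) hε.le
  rw [abs_le, add_div]
  constructor <;> linarith

lemma integrableOn_log_mul_exp_neg : IntegrableOn (fun x => log x * exp (-x)) (Ioi 0) := by
  refine (((GammaIntegral_convergent (s := 3 / 2) (by norm_num)).add
    (GammaIntegral_convergent (s := 1 / 2) (by norm_num))).const_mul 2).mono' ?_ ?_
  · exact (measurable_log.mul (measurable_exp.comp measurable_neg)).aestronglyMeasurable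
  · filter_upwards [ae_restrict_mem measurableSet_Ioi] with x hx
    calc ‖log x * exp (-x)‖ = exp (-x) * |log x| := by
          rw [norm_mul, norm_of_nonneg (exp_pos _).le, norm_eq_abs, mul_comm]
      _ ≤ exp (-x) * ((x ^ (1 / 2 : ℝ) + x ^ (-(1 / 2) : ℝ)) / (1 / 2)) :=
          mul_le_mul_of_nonneg_left (abs_log_le_rpow_add_rpow_neg_div hx.out.le (by norm_num))
            (exp_pos _).le
      _ = _ := by norm_num; ring

lemma integral_log_mul_exp_neg : ∫ x in Ioi 0, log x * exp (-x) = -eulerMascheroniConstant := by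
  have hC : HasDerivAt Complex.Gamma
      (∫ t : ℝ in Ioi 0, (t : ℂ) ^ ((1 : ℂ) - 1) * (log t * exp (-t))) 1 :=
    (Complex.hasDerivAt_GammaIntegral (by norm_num)).congr_of_eventuallyEq <| by
      filter_upwards [(isOpen_lt continuous_const Complex.continuous_re).mem_nhds
        (by norm_num : (0 : ℝ) < (1 : ℂ).re)] with z hz
      exact Complex.Gamma_eq_integral hz
  have hint : (∫ t : ℝ in Ioi 0, (t : ℂ) ^ ((1 : ℂ) - 1) * (log t * exp (-t)))
      = ((∫ t in Ioi 0, log t * exp (-t) : ℝ) : ℂ) := by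
    rw [← integral_complex_ofReal]
    refine setIntegral_congr_fun measurableSet_Ioi fun t _ => ?_
    simp
  rw [hint] at hC
  have hR : HasDerivAt Gamma (∫ t in Ioi 0, log t * exp (-t)) 1 := by
    simpa [Complex.Gamma_ofReal] using hC.real_of_complex
  exact hR.unique hasDerivAt_Gamma_one

lemma integrableOn_exp_neg_div_self {a : ℝ} (ha : 0 < a) :
    IntegrableOn (fun x => exp (-x) / x) (Ioi a) := by
  refine ((exp_neg_integrableOn_Ioi a one_pos).div_const a).mono' ?_ ?_
  · exact ((measurable_exp.comp measurable_neg).div measurable_id).aestronglyMeasurable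
  · filter_upwards [ae_restrict_mem measurableSet_Ioi] with x hx
    rw [norm_div, norm_of_nonneg (exp_pos _).le, norm_of_nonneg (ha.trans hx).le, neg_one_mul]
    exact div_le_div_of_nonneg_left (exp_pos _).le ha hx.out.le

lemma tendsto_exp_neg_mul_log_atTop : Tendsto (fun x => exp (-x) * log x) atTop (𝓝 0) := by
  refine squeeze_zero_norm' ?_ (tendsto_pow_mul_exp_neg_atTop_nhds_zero 1)
  filter_upwards [eventually_ge_atTop 1] with x hx
  rw [norm_mul, norm_of_nonneg (exp_pos _).le, norm_of_nonneg (log_nonneg hx), pow_one, mul_comm]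
  exact mul_le_mul_of_nonneg_right ((log_le_sub_one_of_pos (by linarith)).trans (by linarith))
    (exp_pos _).le

lemma integral_exp_neg_div_self {a : ℝ} (ha : 0 < a) :
    ∫ x in Ioi a, exp (-x) / x = (∫ x in Ioi a, log x * exp (-x)) - exp (-a) * log a := by
  have hderiv : ∀ x ∈ Ici a, HasDerivAt (fun x => exp (-x) * log x)
      (exp (-x) / x - log x * exp (-x)) x := by
    intro x hx
    have h : HasDerivAt (fun x => exp (-x) * log x) _ x :=
      ((hasDerivAt_neg x).exp).mul (hasDerivAt_log (ha.trans_le hx).ne')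
    convert h using 1
    ring
  have hE := integrableOn_exp_neg_div_self ha
  have hL := integrableOn_log_mul_exp_neg.mono_set (Ioi_subset_Ioi ha.le)
  have := integral_Ioi_of_hasDerivAt_of_tendsto' hderiv (hE.sub hL) tendsto_exp_neg_mul_log_atTop
  rw [integral_sub hE hL] at this
  linarith

lemma tendsto_one_sub_exp_neg_mul_log :
    Tendsto (fun a => (1 - exp (-a)) * log a) (𝓝[>] 0) (𝓝 0) := by
  refine squeeze_zero_norm' ?_ (by simpa using (tendsto_log_mul_rpow_nhdsGT_zero one_pos).norm)
  filter_upwards [self_mem_nhdsWithin] with a ha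
  have hle : 1 - exp (-a) ≤ a := by linarith [add_one_le_exp (-a)]
  have hnonneg : 0 ≤ 1 - exp (-a) := sub_nonneg.2 (exp_le_one_iff.2 (by linarith [ha.out]))
  rw [norm_mul, norm_of_nonneg hnonneg, abs_of_pos ha.out, norm_eq_abs, mul_comm |log a|]
  exact mul_le_mul_of_nonneg_right hle (abs_nonneg _)

lemma tendsto_integral_exp_neg_div_self_add_log :
    Tendsto (fun a => (∫ x in Ioi a, exp (-x) / x) + log a) (𝓝[>] 0)
      (𝓝 (-eulerMascheroniConstant)) := by
  have hprim : Tendsto (fun a => ∫ x in Ioi a, log x * exp (-x)) (𝓝[>] 0)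
      (𝓝 (-eulerMascheroniConstant)) := by
    rw [← integral_log_mul_exp_neg]
    exact integrableOn_log_mul_exp_neg.continuousWithinAt_Ici_primitive_Ioi.mono_left
      (nhdsWithin_mono _ Ioi_subset_Ici_self)
  have hsum := hprim.add tendsto_one_sub_exp_neg_mul_log
  rw [add_zero] at hsum
  refine hsum.congr' ?_
  filter_upwards [self_mem_nhdsWithin] with a ha
  rw [integral_exp_neg_div_self ha.out]
  ring

lemma integral_exp_neg_mul_cosh {s : ℝ} (hs : 0 < s) :
    ∫ t in Ioi 0, exp (-s * cosh t) = ∫ x in Ioi (s / 2), exp (-x - (s / 2) ^ 2 / x) / x := by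
  have ha : 0 < s / 2 := half_pos hs
  have himg : (fun t => s / 2 * exp t) '' Ioi 0 = Ioi (s / 2) := by
    rw [show (fun t => s / 2 * exp t) = (s / 2 * ·) ∘ exp from rfl, image_comp, image_exp_Ioi,
      exp_zero, image_mul_left_Ioi ha, mul_one]
  have hderiv : ∀ t ∈ Ioi (0 : ℝ), HasDerivWithinAt (fun t => s / 2 * exp t) (s / 2 * exp t)
      (Ioi 0) t := fun t _ => ((hasDerivAt_exp t).const_mul (s / 2)).hasDerivWithinAt
  have hinj : InjOn (fun t => s / 2 * exp t) (Ioi 0) :=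
    fun t _ u _ h => exp_injective (mul_left_cancel₀ ha.ne' h)
  rw [← himg, integral_image_eq_integral_abs_deriv_smul measurableSet_Ioi hderiv hinj]
  refine setIntegral_congr_fun measurableSet_Ioi fun t _ => ?_
  have hx : 0 < s / 2 * exp t := by positivity
  rw [smul_eq_mul, abs_of_pos hx, mul_div_cancel₀ _ hx.ne', cosh_eq, exp_neg]
  congr 1
  field_simp
  ring

lemma exp_neg_div_sub_exp_neg_sub_div_div_mem_Icc {c x : ℝ} (hc : 0 ≤ c) (hx : 0 < x) :
    exp (-x) / x - exp (-x - c / x) / x ∈ Icc 0 (c * x ^ (-2 : ℝ)) := by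
  have hexp : 0 ≤ 1 - exp (-(c / x)) :=
    sub_nonneg.2 (exp_le_one_iff.2 (neg_nonpos.2 (div_nonneg hc hx.le)))
  rw [sub_eq_add_neg (-x), exp_add, ← sub_div, ← mul_one_sub, rpow_neg hx.le, rpow_two]
  refine ⟨by positivity, ?_⟩
  calc exp (-x) * (1 - exp (-(c / x))) / x ≤ 1 * (c / x) / x := by
        gcongr
        · exact exp_le_one_iff.2 (by linarith)
        · linarith [add_one_le_exp (-(c / x))]
    _ = c * (x ^ 2)⁻¹ := by field_simp

lemma abs_integral_exp_neg_div_self_sub_le {a : ℝ} (ha : 0 < a) :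
    |(∫ x in Ioi a, exp (-x) / x) - ∫ x in Ioi a, exp (-x - a ^ 2 / x) / x| ≤ a := by
  have hE := integrableOn_exp_neg_div_self ha
  have hdom (x : ℝ) (hx : x ∈ Ioi a) :=
    exp_neg_div_sub_exp_neg_sub_div_div_mem_Icc (sq_nonneg a) (ha.trans hx)
  have hK : IntegrableOn (fun x => exp (-x - a ^ 2 / x) / x) (Ioi a) := by
    refine hE.mono'
      (by fun_prop : Measurable fun x => exp (-x - a ^ 2 / x) / x).aestronglyMeasurable ?_
    filter_upwards [ae_restrict_mem measurableSet_Ioi] with x hx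
    rw [norm_of_nonneg (div_nonneg (exp_pos _).le (ha.trans hx).le)]
    linarith [(hdom x hx).1]
  rw [← integral_sub hE hK, ← norm_eq_abs]
  calc ‖∫ x in Ioi a, (exp (-x) / x - exp (-x - a ^ 2 / x) / x)‖
      ≤ ∫ x in Ioi a, a ^ 2 * x ^ (-2 : ℝ) := by
        refine norm_integral_le_of_norm_le
          ((integrableOn_Ioi_rpow_of_lt (by norm_num) ha).const_mul _) ?_
        filter_upwards [ae_restrict_mem measurableSet_Ioi] with x hx
        rw [norm_of_nonneg (hdom x hx).1]
        exact (hdom x hx).2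
    _ = a := by
        rw [integral_const_mul, integral_Ioi_rpow_of_lt (by norm_num) ha]
        norm_num [rpow_neg_one]
        field_simp

/-- As `s → 0⁺`, `K_0(s) + log s → log 2 - γ`, where `γ` is the Euler–Mascheroni constant.
That is, `K_0(s) = -log s + log 2 - γ + o(1)` as `s → 0⁺`. -/
theorem besselK0_add_log_tendsto :
    Tendsto (fun s : ℝ => (∫ t in Ioi (0:ℝ), Real.exp (-s * Real.cosh t)) + Real.log s)
      (nhdsWithin 0 (Ioi 0))
      (nhds (Real.log 2 - Real.eulerMascheroniConstant)) := by
  have hhalf : Tendsto (fun s : ℝ => s / 2) (𝓝[>] 0) (𝓝[>] 0) :=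
    tendsto_nhdsWithin_of_tendsto_nhds_of_eventually_within _
      (by simpa using ((tendsto_id (x := 𝓝 (0 : ℝ))).div_const 2).mono_left nhdsWithin_le_nhds)
      (eventually_mem_nhdsWithin.mono fun s (hs : 0 < s) => half_pos hs)
  have hdiff : Tendsto
      (fun a => (∫ x in Ioi a, exp (-x) / x) - ∫ x in Ioi a, exp (-x - a ^ 2 / x) / x)
      (𝓝[>] 0) (𝓝 0) :=
    squeeze_zero_norm' (eventually_mem_nhdsWithin.mono fun a ha =>
      abs_integral_exp_neg_div_self_sub_le ha) (tendsto_nhdsWithin_of_tendsto_nhds tendsto_id)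
  have hlim := ((tendsto_integral_exp_neg_div_self_add_log.sub hdiff).comp hhalf).add_const (log 2)
  rw [sub_zero, neg_add_eq_sub] at hlim
  refine hlim.congr' ?_
  filter_upwards [self_mem_nhdsWithin] with s hs
  rw [Function.comp_apply, integral_exp_neg_mul_cosh hs, log_div hs.out.ne' two_ne_zero]
  ring
end

section
/- Let a ≥ 3 be real and let c ∈ (0,1). Then there exist constants 0 < C₁ ≤ C₂ (depending on a and c) such that for all u > 0: C₁·u^{2−a}·e^{−u} ≤ L̃_a(u) ≤ C₂·u^{2−a}·e^{−cu}. -/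
open MeasureTheory Real Set

/-!
For the integrand `f_u(s) = exp(-s - u²/(4s)) s^{-a/2}`, AM-GM gives `s + u²/(4s) ≥ u`; more
precisely `s + u²/(4s) = u + (s - u/2)²/s`.

Upper bound: extracting `exp(-cu)` leaves `exp(-(1-c)u²/(4s)) s^{-a/2}`, which is
`O(u^{-a})` uniformly in `s` because `x^k e^{-x} ≤ (k/e)^k`; integrate this over `(0, u²]`, and
on `(u², ∞)` use `f_u(s) ≤ e^{-cu} s^{-a/2}`, whose integral is `O(u^{2-a} e^{-cu})`.

Lower bound: for `u ≤ 1` the integrand is `≳ u^{-a}` on `(u², 2u²]`. For `u ≥ 1` it is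
`≳ e^{-u} u^{-a/2}` on the window `(u/2, u/2 + √u]` around the saddle point `s = u/2`, giving
`u^{(1-a)/2} e^{-u}`, which dominates `u^{2-a} e^{-u}` exactly when `a ≥ 3`.
-/

/-- `L̃_a(u) = ∫_0^∞ exp(-s - u²/(4s)) s^{-a/2} ds` for `u > 0`. -/
noncomputable def Ltilde (a u : ℝ) : ℝ :=
  ∫ s in Ioi (0:ℝ), Real.exp (-s - u^2 / (4*s)) * s ^ (-a/2)

lemma rpow_mul_exp_neg_le {k x : ℝ} (hk : 0 < k) (hx : 0 ≤ x) :
    x ^ k * exp (-x) ≤ (k * exp (-1)) ^ k := by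
  have hxk : 0 ≤ x / k := by positivity
  calc x ^ k * exp (-x) = k ^ k * (x / k * exp (-(x / k))) ^ k := by
        rw [mul_rpow hxk (exp_pos _).le, ← exp_mul, div_rpow hx hk.le]
        field_simp
    _ ≤ k ^ k * exp (-1) ^ k := by
        gcongr
        exact mul_exp_neg_le_exp_neg_one _
    _ = (k * exp (-1)) ^ k := (mul_rpow hk.le (exp_pos _).le).symm

lemma exp_neg_le_mul_rpow_neg {k x : ℝ} (hk : 0 < k) (hx : 0 < x) :
    exp (-x) ≤ (k * exp (-1)) ^ k * x ^ (-k) := by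
  calc exp (-x) = x ^ k * exp (-x) * x ^ (-k) := by
        rw [mul_comm, ← mul_assoc, ← rpow_add hx, neg_add_cancel, rpow_zero, one_mul]
    _ ≤ (k * exp (-1)) ^ k * x ^ (-k) := by
        gcongr
        exact rpow_mul_exp_neg_le hk hx.le

lemma sq_rpow {u : ℝ} (hu : 0 ≤ u) (r : ℝ) : (u ^ 2) ^ r = u ^ (2 * r) := by
  rw [← rpow_natCast_mul hu]; norm_num

lemma sq_mul_rpow_neg {u : ℝ} (hu : 0 < u) (a : ℝ) : u ^ 2 * u ^ (-a) = u ^ (2 - a) := by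
  rw [← rpow_two, ← rpow_add hu, ← sub_eq_add_neg]

lemma le_add_sq_div_four_mul (u : ℝ) {s : ℝ} (hs : 0 < s) : u ≤ s + u ^ 2 / (4 * s) := by
  rw [← sub_le_iff_le_add', le_div_iff₀ (by positivity)]
  nlinarith [sq_nonneg (2 * s - u)]

lemma neg_sub_sq_div_four_mul {u s : ℝ} (hs : s ≠ 0) :
    -s - u ^ 2 / (4 * s) = -u - (s - u / 2) ^ 2 / s := by
  field_simp; ring

lemma mul_le_setIntegral_Ioi_of_le_on {f : ℝ → ℝ} {r p q m : ℝ}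
    (hf : IntegrableOn f (Ioi r)) (hf0 : ∀ s ∈ Ioi r, 0 ≤ f s) (hrp : r ≤ p) (hpq : p ≤ q)
    (hm : ∀ s ∈ Ioc p q, m ≤ f s) : (q - p) * m ≤ ∫ s in Ioi r, f s := by
  have hsub : Ioc p q ⊆ Ioi r := fun s hs => hrp.trans_lt hs.1
  calc (q - p) * m = m * volume.real (Ioc p q) := by rw [volume_real_Ioc_of_le hpq, mul_comm]
    _ ≤ ∫ s in Ioc p q, f s :=
        setIntegral_ge_of_const_le_real measurableSet_Ioc measure_Ioc_lt_top.ne hm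
          (hf.mono_set hsub)
    _ ≤ ∫ s in Ioi r, f s :=
        setIntegral_mono_set hf ((ae_restrict_iff' measurableSet_Ioi).2 (ae_of_all _ hf0))
          hsub.eventuallyLE

noncomputable def LtildeIntegrand (a u s : ℝ) : ℝ := exp (-s - u ^ 2 / (4 * s)) * s ^ (-a / 2)

section LtildeIntegrand

variable {a c u s : ℝ}

lemma Ltilde_eq_integral : Ltilde a u = ∫ s in Ioi 0, LtildeIntegrand a u s := rfl

lemma LtildeIntegrand_nonneg (hs : 0 < s) : 0 ≤ LtildeIntegrand a u s := by
  unfold LtildeIntegrand; positivity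

lemma continuousOn_LtildeIntegrand : ContinuousOn (LtildeIntegrand a u) (Ioi 0) := by
  unfold LtildeIntegrand
  fun_prop (disch := intro s hs; simp_all [ne_of_gt])

lemma LtildeIntegrand_le_exp_mul_rpow (hc : c ≤ 1) (hu : 0 ≤ u) (hs : 0 < s) :
    LtildeIntegrand a u s ≤ exp (-(c * u)) * s ^ (-a / 2) := by
  unfold LtildeIntegrand
  gcongr
  nlinarith [le_add_sq_div_four_mul u hs]

lemma LtildeIntegrand_le_exp_mul_rpow_neg (ha : 0 < a) (hc0 : 0 ≤ c) (hc1 : c < 1) (hu : 0 < u)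
    (hs : 0 < s) : LtildeIntegrand a u s ≤
      exp (-(c * u)) * ((a / 2 * exp (-1)) ^ (a / 2) * ((1 - c) / 4) ^ (-(a / 2)) * u ^ (-a)) := by
  set x := (1 - c) * u ^ 2 / (4 * s)
  have hx : 0 < x := div_pos (mul_pos (by linarith) (by positivity)) (by positivity)
  have hexp : exp (-s - u ^ 2 / (4 * s)) ≤ exp (-(c * u)) * exp (-x) := by
    rw [← exp_add, exp_le_exp]
    have : x = (1 - c) * (u ^ 2 / (4 * s)) := by ring
    nlinarith [le_add_sq_div_four_mul u hs]
  have hxs : x * s = (1 - c) / 4 * u ^ 2 := by simp only [x]; field_simp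
  calc LtildeIntegrand a u s ≤ exp (-(c * u)) * (exp (-x) * s ^ (-(a / 2))) := by
        unfold LtildeIntegrand
        rw [← mul_assoc, neg_div]
        gcongr
    _ ≤ exp (-(c * u)) * ((a / 2 * exp (-1)) ^ (a / 2) * x ^ (-(a / 2)) * s ^ (-(a / 2))) := by
        gcongr
        exact exp_neg_le_mul_rpow_neg (by positivity) hx
    _ = _ := by
        rw [mul_assoc _ (x ^ _), ← mul_rpow hx.le hs.le, hxs,
          mul_rpow (x := (1 - c) / 4) (by linarith) (by positivity), sq_rpow hu.le]
        ring_nf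

lemma integrableOn_LtildeIntegrand (ha : 2 < a) (hu : 0 < u) :
    IntegrableOn (LtildeIntegrand a u) (Ioi 0) := by
  have hu2 : 0 < u ^ 2 := by positivity
  have hmeas (t : Set ℝ) (ht : t ⊆ Ioi 0) (htm : MeasurableSet t) :
      AEStronglyMeasurable (LtildeIntegrand a u) (volume.restrict t) :=
    (continuousOn_LtildeIntegrand.mono ht).aestronglyMeasurable htm
  rw [← Ioc_union_Ioi_eq_Ioi hu2.le]
  refine IntegrableOn.union ?_ ?_
  · refine Integrable.mono'
      (integrable_const ((a / 2 * exp (-1)) ^ (a / 2) * (1 / 4) ^ (-(a / 2)) * u ^ (-a)))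
      (hmeas _ Ioc_subset_Ioi_self measurableSet_Ioc) ?_
    filter_upwards [ae_restrict_mem measurableSet_Ioc] with s hs
    rw [norm_of_nonneg (LtildeIntegrand_nonneg hs.1)]
    simpa using LtildeIntegrand_le_exp_mul_rpow_neg (c := 0) (by linarith) le_rfl one_pos hu hs.1
  · refine Integrable.mono' (integrableOn_Ioi_rpow_of_lt (a := -a / 2) (by linarith) hu2)
      (hmeas _ (Ioi_subset_Ioi hu2.le) measurableSet_Ioi) ?_
    filter_upwards [ae_restrict_mem measurableSet_Ioi] with s hs
    have hs0 : 0 < s := hu2.trans hs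
    rw [norm_of_nonneg (LtildeIntegrand_nonneg hs0)]
    simpa using LtildeIntegrand_le_exp_mul_rpow (a := a) zero_le_one hu.le hs0

end LtildeIntegrand

section Bounds

variable {a c u : ℝ}

lemma exists_Ltilde_le (ha : 2 < a) (hc0 : 0 ≤ c) (hc1 : c < 1) :
    ∃ C, ∀ u, 0 < u → Ltilde a u ≤ C * u ^ (2 - a) * exp (-(c * u)) := by
  set K := (a / 2 * exp (-1)) ^ (a / 2) * ((1 - c) / 4) ^ (-(a / 2))
  refine ⟨K + 2 / (a - 2), fun u hu => ?_⟩
  have hu2 : 0 < u ^ 2 := by positivity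
  have hi := integrableOn_LtildeIntegrand ha hu
  have hi₁ : IntegrableOn (LtildeIntegrand a u) (Ioc 0 (u ^ 2)) := hi.mono_set Ioc_subset_Ioi_self
  have hi₂ : IntegrableOn (LtildeIntegrand a u) (Ioi (u ^ 2)) :=
    hi.mono_set (Ioi_subset_Ioi hu2.le)
  have hbody : ∫ s in Ioc 0 (u ^ 2), LtildeIntegrand a u s ≤ K * u ^ (2 - a) * exp (-(c * u)) :=
    calc _ ≤ ∫ _ in Ioc 0 (u ^ 2), exp (-(c * u)) * (K * u ^ (-a)) :=
          setIntegral_mono_on hi₁ (integrableOn_const measure_Ioc_lt_top.ne) measurableSet_Ioc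
            fun s hs => LtildeIntegrand_le_exp_mul_rpow_neg (by linarith) hc0 hc1 hu hs.1
      _ = K * u ^ (2 - a) * exp (-(c * u)) := by
          rw [setIntegral_const, volume_real_Ioc_of_le hu2.le, smul_eq_mul, sub_zero,
            ← sq_mul_rpow_neg hu]
          ring
  have htail : ∫ s in Ioi (u ^ 2), LtildeIntegrand a u s
      ≤ 2 / (a - 2) * u ^ (2 - a) * exp (-(c * u)) :=
    calc _ ≤ ∫ s in Ioi (u ^ 2), exp (-(c * u)) * s ^ (-a / 2) :=
          setIntegral_mono_on hi₂
            ((integrableOn_Ioi_rpow_of_lt (a := -a / 2) (by linarith) hu2).const_mul _)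
            measurableSet_Ioi
            fun s hs => LtildeIntegrand_le_exp_mul_rpow hc1.le hu.le (hu2.trans hs)
      _ = 2 / (a - 2) * u ^ (2 - a) * exp (-(c * u)) := by
          rw [integral_const_mul, integral_Ioi_rpow_of_lt (by linarith) hu2, sq_rpow hu.le,
            show 2 * (-a / 2 + 1) = 2 - a by ring, show -a / 2 + 1 = -((a - 2) / 2) by ring,
            neg_div_neg_eq, div_div_eq_mul_div]
          ring
  rw [Ltilde_eq_integral, ← Ioc_union_Ioi_eq_Ioi hu2.le,
    setIntegral_union Ioc_disjoint_Ioi_same measurableSet_Ioi hi₁ hi₂]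
  linarith

lemma exp_mul_rpow_le_Ltilde_of_le_one (ha : 2 < a) (hu : 0 < u) (hu1 : u ≤ 1) :
    exp (-(9 / 4)) * 2 ^ (-a / 2) * u ^ (2 - a) ≤ Ltilde a u := by
  have hu2 : 0 < u ^ 2 := by positivity
  have hm : ∀ s ∈ Ioc (u ^ 2) (2 * u ^ 2),
      exp (-(9 / 4)) * (2 * u ^ 2) ^ (-a / 2) ≤ LtildeIntegrand a u s := by
    rintro s ⟨hs1, hs2⟩
    have hs0 : 0 < s := hu2.trans hs1
    have hquarter : u ^ 2 / (4 * s) ≤ 1 / 4 := by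
      rw [div_le_iff₀ (by positivity)]; linarith
    exact mul_le_mul (exp_le_exp.2 (by nlinarith)) (rpow_le_rpow_of_nonpos hs0 hs2 (by linarith))
      (by positivity) (by positivity)
  calc exp (-(9 / 4)) * 2 ^ (-a / 2) * u ^ (2 - a)
      = (2 * u ^ 2 - u ^ 2) * (exp (-(9 / 4)) * (2 * u ^ 2) ^ (-a / 2)) := by
        rw [mul_rpow zero_le_two hu2.le, sq_rpow hu.le, show 2 * (-a / 2) = -a by ring,
          ← sq_mul_rpow_neg hu]
        ring
    _ ≤ Ltilde a u :=
        mul_le_setIntegral_Ioi_of_le_on (integrableOn_LtildeIntegrand ha hu)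
          (fun _ hs => LtildeIntegrand_nonneg hs) hu2.le (by linarith) hm

lemma exp_mul_rpow_mul_exp_neg_le_Ltilde_of_one_le (ha : 2 < a) (hu1 : 1 ≤ u) :
    exp (-2) * (3 / 2) ^ (-a / 2) * u ^ ((1 - a) / 2) * exp (-u) ≤ Ltilde a u := by
  have hu : 0 < u := by linarith
  have hsqrt : √u ≤ u := sqrt_le_self_iff.2 (Or.inr hu1)
  have hm : ∀ s ∈ Ioc (u / 2) (u / 2 + √u),
      exp (-u) * exp (-2) * (3 / 2 * u) ^ (-a / 2) ≤ LtildeIntegrand a u s := by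
    rintro s ⟨hs1, hs2⟩
    have hs0 : 0 < s := by linarith
    have hdev : (s - u / 2) ^ 2 / s ≤ 2 := by
      rw [div_le_iff₀ hs0]
      nlinarith [sq_sqrt hu.le]
    unfold LtildeIntegrand
    rw [neg_sub_sq_div_four_mul hs0.ne', sub_eq_add_neg, exp_add]
    exact mul_le_mul (mul_le_mul_of_nonneg_left (exp_le_exp.2 (by linarith)) (exp_pos _).le)
      (rpow_le_rpow_of_nonpos hs0 (by linarith) (by linarith)) (by positivity) (by positivity)
  calc exp (-2) * (3 / 2) ^ (-a / 2) * u ^ ((1 - a) / 2) * exp (-u)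
      = (u / 2 + √u - u / 2) * (exp (-u) * exp (-2) * (3 / 2 * u) ^ (-a / 2)) := by
        rw [mul_rpow (by norm_num) hu.le, add_sub_cancel_left, sqrt_eq_rpow,
          show (1 - a) / 2 = 1 / 2 + -a / 2 by ring, rpow_add hu]
        ring
    _ ≤ Ltilde a u :=
        mul_le_setIntegral_Ioi_of_le_on (integrableOn_LtildeIntegrand ha hu)
          (fun _ hs => LtildeIntegrand_nonneg hs) (by positivity)
          (le_add_of_nonneg_right (sqrt_nonneg u)) hm

end Bounds

/-- For `a ≥ 3` and `c ∈ (0,1)` there are constants `0 < C₁ ≤ C₂` with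
`C₁ u^{2-a} e^{-u} ≤ L̃_a(u) ≤ C₂ u^{2-a} e^{-cu}` for all `u > 0`. -/
theorem Ltilde_bounds (a c : ℝ) (ha : 3 ≤ a) (hc : c ∈ Ioo (0:ℝ) 1) :
    ∃ C₁ C₂ : ℝ, 0 < C₁ ∧ C₁ ≤ C₂ ∧ ∀ u : ℝ, 0 < u →
      C₁ * u ^ (2 - a) * Real.exp (-u) ≤ Ltilde a u ∧
      Ltilde a u ≤ C₂ * u ^ (2 - a) * Real.exp (-(c * u)) := by
  obtain ⟨C, hC⟩ := exists_Ltilde_le (by linarith : 2 < a) hc.1.le hc.2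
  set C₁ := exp (-(9 / 4)) * 2 ^ (-a / 2)
  refine ⟨C₁, max C₁ C, by positivity, le_max_left _ _, fun u hu => ⟨?_, ?_⟩⟩
  · rcases le_total u 1 with hu1 | hu1
    · calc C₁ * u ^ (2 - a) * exp (-u) ≤ C₁ * u ^ (2 - a) :=
            mul_le_of_le_one_right (by positivity) (exp_le_one_iff.2 (by linarith))
        _ ≤ Ltilde a u := exp_mul_rpow_le_Ltilde_of_le_one (by linarith) hu hu1
    · calc C₁ * u ^ (2 - a) * exp (-u)
          ≤ exp (-2) * (3 / 2) ^ (-a / 2) * u ^ ((1 - a) / 2) * exp (-u) := by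
            have hC₁ : C₁ ≤ exp (-2) * (3 / 2) ^ (-a / 2) :=
              mul_le_mul (exp_le_exp.2 (by norm_num))
                (rpow_le_rpow_of_nonpos (by norm_num) (by norm_num) (by linarith))
                (by positivity) (by positivity)
            have hpow : u ^ (2 - a) ≤ u ^ ((1 - a) / 2) :=
              rpow_le_rpow_of_exponent_le hu1 (by linarith)
            gcongr
        _ ≤ Ltilde a u := exp_mul_rpow_mul_exp_neg_le_Ltilde_of_one_le (by linarith) hu1
  · calc Ltilde a u ≤ C * u ^ (2 - a) * exp (-(c * u)) := hC u hu
      _ ≤ max C₁ C * u ^ (2 - a) * exp (-(c * u)) := by gcongr; exact le_max_right _ _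
end

section
/- For every c > 0 and every R > 1 there exists a constant C such that for all k ∈ (0, 1/2]: ∫_R^∞ (1 + |log(kr)|)²·e^{−2ckr}·(r·log r)^{−2}·r dr ≤ C·(log(1/k))³. -/
/-!
Split the range of integration at `k r = 1`. Where `k r ≤ 1` one has `|log (k r)| ≤ log (1/k)`,
and where `k r > 1` the factor `(1 + log (k r))² ≤ (k r)²` is absorbed by `exp (-2 c k r)`. So the
integrand is at most `M (1 + log (1/k))² / (r log² r)` with `M` depending only on `c`, and since
`-1 / log r` is a primitive of `1 / (r log² r)` the integral is at most `M (1 + log (1/k))² / log R`.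
Finally `log (1/k) ≥ log 2` turns the square into a cube.
-/

open MeasureTheory Real Set Filter Topology

lemma sq_one_add_log_mul_exp_neg_le {a x : ℝ} (ha : 0 < a) (hx : 1 ≤ x) :
    (1 + log x) ^ 2 * exp (-(a * x)) ≤ 2 / a ^ 2 := by
  have hx0 : 0 < x := by linarith
  have hlog : (1 + log x) ^ 2 ≤ x ^ 2 := by
    gcongr
    · linarith [log_nonneg hx]
    · linarith [log_le_sub_one_of_pos hx0]
  have hexp : (a * x) ^ 2 / 2 ≤ exp (a * x) := by
    simpa using pow_div_factorial_le_exp (a * x) (by positivity) 2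
  rw [exp_neg, ← div_eq_mul_inv, div_le_div_iff₀ (exp_pos _) (by positivity)]
  calc (1 + log x) ^ 2 * a ^ 2 ≤ x ^ 2 * a ^ 2 := by gcongr
    _ ≤ 2 * exp (a * x) := by nlinarith

lemma abs_log_mul_le_log_inv {k r : ℝ} (hk : 0 < k) (hr : 1 ≤ r) (hkr : k * r ≤ 1) :
    |log (k * r)| ≤ log (1 / k) := by
  have hr0 : 0 < r := by linarith
  rw [abs_of_nonpos (log_nonpos (by positivity) hkr), log_mul hk.ne' hr0.ne', one_div, log_inv]
  linarith [log_nonneg hr]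

lemma sq_one_add_abs_log_mul_exp_neg_le {a k r : ℝ} (ha : 0 < a) (hk : k ∈ Ioc 0 1)
    (hr : 1 ≤ r) :
    (1 + |log (k * r)|) ^ 2 * exp (-(a * k * r)) ≤ (1 + 2 / a ^ 2) * (1 + log (1 / k)) ^ 2 := by
  obtain ⟨hk0, hk1⟩ := hk
  have hL : 0 ≤ log (1 / k) := log_nonneg (by rw [le_div_iff₀ hk0]; linarith)
  have hM : 0 ≤ 2 / a ^ 2 := by positivity
  rcases le_or_gt (k * r) 1 with hkr | hkr
  · calc (1 + |log (k * r)|) ^ 2 * exp (-(a * k * r)) ≤ (1 + log (1 / k)) ^ 2 * 1 := by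
          gcongr
          · exact abs_log_mul_le_log_inv hk0 hr hkr
          · rw [exp_le_one_iff, neg_nonpos]; positivity
      _ ≤ (1 + 2 / a ^ 2) * (1 + log (1 / k)) ^ 2 := by nlinarith
  · rw [abs_of_nonneg (log_nonneg hkr.le), mul_assoc a]
    calc (1 + log (k * r)) ^ 2 * exp (-(a * (k * r))) ≤ 2 / a ^ 2 :=
          sq_one_add_log_mul_exp_neg_le ha hkr.le
      _ ≤ (1 + 2 / a ^ 2) * 1 := by linarith
      _ ≤ (1 + 2 / a ^ 2) * (1 + log (1 / k)) ^ 2 := by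
          gcongr; exact one_le_pow₀ (by linarith)

lemma one_add_sq_le_mul_pow_three {l L : ℝ} (hl : 0 < l) (hL : l ≤ L) :
    (1 + L) ^ 2 ≤ (1 + l) ^ 2 / l ^ 3 * L ^ 3 := by
  have hL0 : 0 ≤ L := hl.le.trans hL
  have h : (1 + L) * l ≤ (1 + l) * L := by nlinarith
  rw [div_mul_eq_mul_div, le_div_iff₀ (by positivity)]
  calc (1 + L) ^ 2 * l ^ 3 = ((1 + L) * l) ^ 2 * l := by ring
    _ ≤ ((1 + l) * L) ^ 2 * L := by gcongr
    _ = (1 + l) ^ 2 * L ^ 3 := by ring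

lemma hasDerivAt_neg_inv_log {x : ℝ} (hx : 1 < x) :
    HasDerivAt (fun y => -(log y)⁻¹) (x * log x ^ 2)⁻¹ x := by
  have hlog : log x ≠ 0 := (log_pos hx).ne'
  refine (((hasDerivAt_log (by positivity)).inv hlog).neg).congr_deriv ?_
  rw [neg_div, neg_neg, div_eq_mul_inv, mul_inv]

lemma tendsto_neg_inv_log_atTop : Tendsto (fun y => -(log y)⁻¹) atTop (𝓝 0) := by
  simpa using tendsto_log_atTop.inv_tendsto_atTop.neg

lemma inv_mul_log_sq_nonneg {x : ℝ} (hx : 0 ≤ x) : 0 ≤ (x * log x ^ 2)⁻¹ := by positivity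

lemma integrableOn_Ioi_inv_mul_log_sq {R : ℝ} (hR : 1 < R) :
    IntegrableOn (fun r => (r * log r ^ 2)⁻¹) (Ioi R) :=
  integrableOn_Ioi_deriv_of_nonneg' (fun _ hx => hasDerivAt_neg_inv_log (hR.trans_le hx))
    (fun _ hx => inv_mul_log_sq_nonneg (by linarith [mem_Ioi.mp hx])) tendsto_neg_inv_log_atTop

lemma integral_Ioi_inv_mul_log_sq {R : ℝ} (hR : 1 < R) :
    ∫ r in Ioi R, (r * log r ^ 2)⁻¹ = (log R)⁻¹ := by
  rw [integral_Ioi_of_hasDerivAt_of_nonneg' (fun _ hx => hasDerivAt_neg_inv_log (hR.trans_le hx))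
    (fun _ hx => inv_mul_log_sq_nonneg (by linarith [mem_Ioi.mp hx])) tendsto_neg_inv_log_atTop]
  simp

lemma integral_Ioi_weight_le {a k R : ℝ} (ha : 0 < a) (hk : k ∈ Ioc 0 1) (hR : 1 < R) :
    ∫ r in Ioi R, (1 + |log (k * r)|) ^ 2 * exp (-(a * k * r)) * ((r * log r) ^ 2)⁻¹ * r
      ≤ (1 + 2 / a ^ 2) * (1 + log (1 / k)) ^ 2 * (log R)⁻¹ := by
  rw [← integral_Ioi_inv_mul_log_sq hR, ← integral_const_mul]
  refine integral_mono_of_nonneg (ae_restrict_of_forall_mem measurableSet_Ioi fun r hr => ?_)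
    ((integrableOn_Ioi_inv_mul_log_sq hR).const_mul _)
    (ae_restrict_of_forall_mem measurableSet_Ioi fun r hr => ?_)
  · have : 0 < r := by linarith [mem_Ioi.mp hr]
    simp only [Pi.zero_apply]
    positivity
  · have hr1 : 1 < r := hR.trans hr
    have hr0 : r ≠ 0 := by positivity
    calc (1 + |log (k * r)|) ^ 2 * exp (-(a * k * r)) * ((r * log r) ^ 2)⁻¹ * r
        = (1 + |log (k * r)|) ^ 2 * exp (-(a * k * r)) * (r * log r ^ 2)⁻¹ := by
          field_simp
      _ ≤ (1 + 2 / a ^ 2) * (1 + log (1 / k)) ^ 2 * (r * log r ^ 2)⁻¹ :=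
          mul_le_mul_of_nonneg_right (sq_one_add_abs_log_mul_exp_neg_le ha hk hr1.le)
            (inv_mul_log_sq_nonneg (by positivity))

/-- For `c > 0` and `R > 1` there is `C` so that for all `k ∈ (0, 1/2]`:
`∫_R^∞ (1 + |log(kr)|)² e^{-2ckr} (r log r)^{-2} r dr ≤ C (log(1/k))³`. -/
theorem log_weight_integral_bound (c R : ℝ) (hc : 0 < c) (hR : 1 < R) :
    ∃ C : ℝ, ∀ k : ℝ, k ∈ Ioc (0:ℝ) (1/2) →
      (∫ r in Ioi R,
          (1 + |Real.log (k * r)|)^2 * Real.exp (-(2 * c * k * r)) *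
            ((r * Real.log r)^2)⁻¹ * r)
        ≤ C * (Real.log (1/k))^3 := by
  refine ⟨(1 + 2 / (2 * c) ^ 2) * (log R)⁻¹ * ((1 + log 2) ^ 2 / log 2 ^ 3), fun k hk => ?_⟩
  have hk1 : k ∈ Ioc 0 1 := ⟨hk.1, by linarith [hk.2]⟩
  have hlog2 : log 2 ≤ log (1 / k) :=
    log_le_log two_pos (by rw [le_div_iff₀ hk.1]; linarith [hk.2])
  calc _ ≤ (1 + 2 / (2 * c) ^ 2) * (1 + log (1 / k)) ^ 2 * (log R)⁻¹ :=
        integral_Ioi_weight_le (by positivity) hk1 hR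
    _ ≤ (1 + 2 / (2 * c) ^ 2) * ((1 + log 2) ^ 2 / log 2 ^ 3 * log (1 / k) ^ 3) * (log R)⁻¹ := by
        have := log_pos hR
        gcongr
        exact one_add_sq_le_mul_pow_three (log_pos one_lt_two) hlog2
    _ = _ := by ring
end
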